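/- Under conditions (P1)–(P4), and assuming SOL(K, w + G(·), φ) is nonempty for every w ∈ Ω₁*, for every θ ∈ C([0,T],Ω₂) there exists a strongly measurable function l : [0,T] → Ω₁ such that l(ξ) ∈ U(ξ,θ(ξ)) for a.e. ξ ∈ [0,T]; moreover any such l is essentially bounded, hence belongs to L²([0,T],Ω₁), so the set P_U(θ) is nonempty. -/

import Mathlib

open MeasureTheory Set Filter Topology
open scoped ENNReal

noncomputable section

/-- `SOL K G φ w` is the solution set `SOL(K, w + G(·), φ)` of the generalized mixed
variational inequality: all `u ∈ K` with `⟨w + G(u), v - u⟩ + φ(v) - φ(u) ≥ 0` for all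
`v ∈ K` (written without `EReal` subtraction as `φ(u) ≤ ⟨w + G(u), v - u⟩ + φ(v)`). -/
def SOL {Ω₁ : Type*} [NormedAddCommGroup Ω₁] [NormedSpace ℝ Ω₁]
    (K : Set Ω₁) (G : Ω₁ → (Ω₁ →L[ℝ] ℝ)) (φ : Ω₁ → EReal) (w : Ω₁ →L[ℝ] ℝ) : Set Ω₁ :=
  {u | u ∈ K ∧ ∀ v ∈ K, φ u ≤ ((w (v - u) + (G u) (v - u) : ℝ) : EReal) + φ v}

/-- (P1): `G` is monotone on `K` and hemicontinuous on `K`. -/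
def condP1 {Ω₁ : Type*} [NormedAddCommGroup Ω₁] [NormedSpace ℝ Ω₁]
    (K : Set Ω₁) (G : Ω₁ → (Ω₁ →L[ℝ] ℝ)) : Prop :=
  (∀ u ∈ K, ∀ v ∈ K, 0 ≤ (G v - G u) (v - u)) ∧
  (∀ u ∈ K, ∀ v ∈ K, ∀ x : Ω₁,
    ContinuousOn (fun t : ℝ => (G (u + t • (v - u))) x) (Icc (0:ℝ) 1))

/-- (P2): `φ : Ω₁ → ℝ ∪ {+∞}` (an `EReal`-valued map never taking the value `⊥`) is
proper, convex and lower semicontinuous. -/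
def condP2 {Ω₁ : Type*} [NormedAddCommGroup Ω₁] [NormedSpace ℝ Ω₁] (φ : Ω₁ → EReal) : Prop :=
  (∀ u, φ u ≠ ⊥) ∧ (∃ u, φ u ≠ ⊤) ∧
  (∀ u v : Ω₁, ∀ t : ℝ, t ∈ Icc (0:ℝ) 1 →
    φ (t • u + (1 - t) • v) ≤ (t : EReal) * φ u + ((1 - t : ℝ) : EReal) * φ v) ∧
  LowerSemicontinuous φ

/-- (P3): coercivity: there is `v* ∈ K ∩ D(φ)` with
`(⟨G(u), u - v*⟩ + φ(u) - φ(v*))/‖u‖ → +∞` as `‖u‖ → ∞`, `u ∈ K`. -/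
def condP3 {Ω₁ : Type*} [NormedAddCommGroup Ω₁] [NormedSpace ℝ Ω₁]
    (K : Set Ω₁) (G : Ω₁ → (Ω₁ →L[ℝ] ℝ)) (φ : Ω₁ → EReal) : Prop :=
  ∃ vs ∈ K, φ vs ≠ ⊤ ∧
    ∀ M : ℝ, ∃ R : ℝ, ∀ u ∈ K, R ≤ ‖u‖ →
      ((M * ‖u‖ : ℝ) : EReal) + φ vs ≤ (((G u) (u - vs) : ℝ) : EReal) + φ u

/-- (P4): `g` is continuous and bounded on `[0,T] × Ω₂`. -/
def condP4 {Ω₁ Ω₂ : Type*} [NormedAddCommGroup Ω₁] [NormedSpace ℝ Ω₁]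
    [NormedAddCommGroup Ω₂] [NormedSpace ℝ Ω₂]
    (T : ℝ) (g : ℝ → Ω₂ → (Ω₁ →L[ℝ] ℝ)) : Prop :=
  ContinuousOn (fun p : ℝ × Ω₂ => g p.1 p.2) (Icc (0:ℝ) T ×ˢ univ) ∧
  ∃ C : ℝ, ∀ ξ ∈ Icc (0:ℝ) T, ∀ θ : Ω₂, ‖g ξ θ‖ ≤ C

/-- Extension of `θ ∈ C([0,T], Ω₂)` to all of `ℝ` by projecting onto `[0,T]`
(only its values on `[0,T]` are ever used). -/
def extIcc {Ω₂ : Type*} [TopologicalSpace Ω₂] {T : ℝ} (hT : (0:ℝ) ≤ T)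
    (θ : C(Icc (0:ℝ) T, Ω₂)) (s : ℝ) : Ω₂ :=
  θ (Set.projIcc 0 T hT s)

/-- `P_U(θ)`: the set of `L²` selections of `ξ ↦ U(ξ, θ(ξ))`. -/
def PUset {Ω₁ Ω₂ : Type*} [NormedAddCommGroup Ω₁] [NormedSpace ℝ Ω₁]
    [NormedAddCommGroup Ω₂] [NormedSpace ℝ Ω₂]
    (K : Set Ω₁) (G : Ω₁ → (Ω₁ →L[ℝ] ℝ)) (φ : Ω₁ → EReal)
    {T : ℝ} (hT : (0:ℝ) ≤ T) (g : ℝ → Ω₂ → (Ω₁ →L[ℝ] ℝ))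
    (θ : C(Icc (0:ℝ) T, Ω₂)) : Set (ℝ → Ω₁) :=
  {l | MemLp l 2 (volume.restrict (Icc (0:ℝ) T)) ∧
    ∀ᵐ ξ ∂(volume.restrict (Icc (0:ℝ) T)), l ξ ∈ SOL K G φ (g ξ (extIcc hT θ ξ))}

/-!
By Minty's lemma (monotonicity and hemicontinuity of `G`), `SOL(K, w + G, φ)` is the intersection
of `K` with the sets `{u | φ u ≤ ⟨w + G v, v - u⟩ + φ v}`, `v ∈ K`, which are closed and convex,
hence weakly closed, and (P3) bounds it uniformly for bounded `w`. Closed balls being weakly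
compact in a reflexive space, weak cluster points of solutions for `w n → w` solve the problem
for `w`, so `w ↦ dist(x, SOL(K, w + G, φ))` is lower semicontinuous. Composed with the continuous
`ξ ↦ g(ξ, θ(ξ))` this makes `ξ ↦ U(ξ, θ(ξ))` a closed-valued measurable multifunction, and the
Kuratowski–Ryll-Nardzewski theorem gives a strongly measurable selection. Every selection is
bounded by the uniform bound on solutions, hence lies in `L²`.
-/

open Metric

section WeakTopology

variable {E : Type*} [NormedAddCommGroup E] [NormedSpace ℝ E] {ι : Type*}

lemma isCompact_toWeakSpace_image
    (hrefl : Function.Surjective ⇑(NormedSpace.inclusionInDoubleDual ℝ E))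
    {s : Set E} (hcl : IsClosed s) (hcv : Convex ℝ s) (hb : Bornology.IsBounded s) :
    IsCompact (toWeakSpace ℝ E '' s) := by
  have h := NormedSpace.isCompact_closure_of_isBounded ℝ E (toWeakSpace ℝ E '' s)
    (by rwa [(toWeakSpace ℝ E).injective.preimage_image]) fun y _ => by
      obtain ⟨x, hx⟩ := hrefl (WeakDual.toStrongDual y)
      exact ⟨toWeakSpace ℝ E x, hx⟩
  rwa [← hcv.toWeakSpace_closure ℝ, hcl.closure_eq] at h

lemma exists_clusterPt_toWeakSpace
    (hrefl : Function.Surjective ⇑(NormedSpace.inclusionInDoubleDual ℝ E))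
    {s : Set E} (hcl : IsClosed s) (hcv : Convex ℝ s) (hb : Bornology.IsBounded s)
    {l : Filter ι} [l.NeBot] {u : ι → E} (hu : ∀ᶠ i in l, u i ∈ s) :
    ∃ u₀ ∈ s, ClusterPt (toWeakSpace ℝ E u₀) (map (toWeakSpace ℝ E ∘ u) l) := by
  obtain ⟨_, ⟨u₀, hu₀, rfl⟩, hclus⟩ :=
    (isCompact_toWeakSpace_image hrefl hcl hcv hb).exists_clusterPt (tendsto_principal.mpr (hu.mono fun i hi => mem_image_of_mem _ hi))
  exact ⟨u₀, hu₀, hclus⟩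

lemma mem_of_clusterPt_toWeakSpace {C : Set E} (hcl : IsClosed C) (hcv : Convex ℝ C)
    {l : Filter ι} {u : ι → E} {u₀ : E}
    (hclus : ClusterPt (toWeakSpace ℝ E u₀) (map (toWeakSpace ℝ E ∘ u) l))
    (hu : ∀ᶠ i in l, u i ∈ C) : u₀ ∈ C := by
  have hweak : toWeakSpace ℝ E u₀ ∈ closure (toWeakSpace ℝ E '' C) :=
    mem_closure_iff_clusterPt.mpr
      (hclus.mono (tendsto_principal.mpr (hu.mono fun i hi => mem_image_of_mem _ hi)))
  rw [← hcv.toWeakSpace_closure ℝ, hcl.closure_eq] at hweak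
  obtain ⟨v, hv, hvu⟩ := hweak
  rwa [← (toWeakSpace ℝ E).injective hvu]

lemma eventually_forall_apply_le_of_tendsto {l : Filter ι} {w : ι → E →L[ℝ] ℝ}
    {w₀ : E →L[ℝ] ℝ} (hw : Tendsto w l (𝓝 w₀)) (M : ℝ) {ε : ℝ} (hε : 0 < ε) :
    ∀ᶠ i in l, ∀ y : E, ‖y‖ ≤ M → w i y ≤ w₀ y + ε := by
  have h : Tendsto (fun i => ‖w i - w₀‖ * M) l (𝓝 0) := by
    simpa using (tendsto_iff_norm_sub_tendsto_zero.mp hw).mul_const M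
  filter_upwards [h.eventually_lt_const hε] with i hi y hy
  have h1 : (w i - w₀) y ≤ ‖w i - w₀‖ * ‖y‖ := (le_abs_self _).trans ((w i - w₀).le_opNorm y)
  have h2 := mul_le_mul_of_nonneg_left hy (norm_nonneg (w i - w₀))
  rw [sub_apply] at h1
  linarith

end WeakTopology

lemma lowerSemicontinuous_infDist {X Y : Type*} [TopologicalSpace X] [PseudoMetricSpace Y]
    {F : X → Set Y} (hne : ∀ p, (F p).Nonempty) (y : Y)
    (hF : ∀ r, IsClosed {p | (F p ∩ closedBall y r).Nonempty}) :
    LowerSemicontinuous fun p => infDist y (F p) := by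
  refine lowerSemicontinuous_iff_isClosed_preimage.mpr fun r => ?_
  have hsub : (fun p => infDist y (F p)) ⁻¹' Iic r
      = ⋂ ε > 0, {p | (F p ∩ closedBall y (r + ε)).Nonempty} := by
    ext p
    simp only [mem_preimage, mem_Iic, mem_iInter, mem_ofPred_eq]
    constructor
    · intro h ε hε
      obtain ⟨z, hz, hzd⟩ := (infDist_lt_iff (hne p)).mp (h.trans_lt (lt_add_of_pos_right r hε))
      exact ⟨z, hz, mem_closedBall'.mpr hzd.le⟩
    · intro h
      refine le_of_forall_pos_le_add fun ε hε => ?_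
      obtain ⟨z, hz, hzd⟩ := h ε hε
      exact (infDist_le_dist_of_mem hz).trans (mem_closedBall'.mp hzd)
  rw [hsub]
  exact isClosed_biInter fun ε _ => hF _

section Selection

open TopologicalSpace

variable {α Ω : Type*} [MeasurableSpace α] [MetricSpace Ω]

lemma exists_measurable_nat_forall {p : α → ℕ → Prop} (hp : ∀ a, ∃ m, p a m)
    (hm : ∀ m, MeasurableSet {a | p a m}) : ∃ k : α → ℕ, Measurable k ∧ ∀ a, p a (k a) := by
  classical
  exact ⟨fun a => Nat.find (hp a), measurable_find hp hm, fun a => Nat.find_spec (hp a)⟩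

variable [SeparableSpace Ω] [Nonempty Ω] {F : α → Set Ω}

lemma exists_measurable_denseSeq_infDist_lt (hne : ∀ a, (F a).Nonempty)
    (hF : ∀ x, Measurable fun a => infDist x (F a)) {δ : ℝ} (hδ : 0 < δ) :
    ∃ k : α → ℕ, Measurable k ∧ ∀ a, infDist (denseSeq Ω (k a)) (F a) < δ := by
  refine exists_measurable_nat_forall (fun a => ?_) fun m =>
    measurableSet_lt (hF _) measurable_const
  obtain ⟨u, hu⟩ := hne a
  obtain ⟨m, hm⟩ := (denseRange_denseSeq Ω).exists_dist_lt u hδ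
  exact ⟨m, (infDist_le_dist_of_mem hu).trans_lt (by rwa [dist_comm])⟩

lemma exists_measurable_denseSeq_infDist_lt_of_infDist_lt (hne : ∀ a, (F a).Nonempty)
    (hF : ∀ x, Measurable fun a => infDist x (F a)) {k : α → ℕ} (hk : Measurable k) {ε δ : ℝ}
    (hkF : ∀ a, infDist (denseSeq Ω (k a)) (F a) < ε) (hδ : 0 < δ) :
    ∃ k' : α → ℕ, Measurable k' ∧ ∀ a, infDist (denseSeq Ω (k' a)) (F a) < δ ∧
      dist (denseSeq Ω (k' a)) (denseSeq Ω (k a)) < ε + δ := by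
  refine exists_measurable_nat_forall (p := fun a m => infDist (denseSeq Ω m) (F a) < δ ∧
    dist (denseSeq Ω m) (denseSeq Ω (k a)) < ε + δ) (fun a => ?_) fun m =>
    (measurableSet_lt (hF _) measurable_const).inter
      (hk (.of_discrete (s := {j | dist (denseSeq Ω m) (denseSeq Ω j) < ε + δ})))
  obtain ⟨u, hu, hud⟩ := (infDist_lt_iff (hne a)).mp (hkF a)
  obtain ⟨m, hm⟩ := (denseRange_denseSeq Ω).exists_dist_lt u hδ
  rw [dist_comm] at hm
  refine ⟨m, (infDist_le_dist_of_mem hu).trans_lt hm, ?_⟩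
  calc dist (denseSeq Ω m) (denseSeq Ω (k a))
      ≤ dist (denseSeq Ω m) u + dist u (denseSeq Ω (k a)) := dist_triangle _ _ _
    _ < ε + δ := by rw [dist_comm u]; linarith

/-- The Kuratowski–Ryll-Nardzewski selection theorem. -/
theorem exists_stronglyMeasurable_selection [CompleteSpace Ω] (hne : ∀ a, (F a).Nonempty)
    (hcl : ∀ a, IsClosed (F a)) (hF : ∀ x, Measurable fun a => infDist x (F a)) :
    ∃ l : α → Ω, StronglyMeasurable l ∧ ∀ a, l a ∈ F a := by
  let Approx (n : ℕ) := {k : α → ℕ // Measurable k ∧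
    ∀ a, infDist (denseSeq Ω (k a)) (F a) < (1 / 2 : ℝ) ^ n}
  obtain ⟨k₀, hk₀, hk₀F⟩ := exists_measurable_denseSeq_infDist_lt hne hF one_pos
  have hstep : ∀ n (k : Approx n), ∃ k' : Approx (n + 1), ∀ a,
      dist (denseSeq Ω (k'.1 a)) (denseSeq Ω (k.1 a)) < 2 * (1 / 2 : ℝ) ^ n := by
    intro n ⟨k, hk, hkF⟩
    obtain ⟨k', hk', hk'F⟩ := exists_measurable_denseSeq_infDist_lt_of_infDist_lt hne hF hk hkF
      (pow_pos (by norm_num : (0 : ℝ) < 1 / 2) (n + 1))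
    refine ⟨⟨k', hk', fun a => (hk'F a).1⟩, fun a => (hk'F a).2.trans_le ?_⟩
    rw [pow_succ]
    linarith [pow_pos (by norm_num : (0 : ℝ) < 1 / 2) n]
  choose next hnext using hstep
  let seq : (n : ℕ) → Approx n := fun n =>
    Nat.rec ⟨k₀, hk₀, by simpa using hk₀F⟩ (fun n k => next n k) n
  have hcauchy : ∀ a, CauchySeq fun n => denseSeq Ω ((seq n).1 a) := fun a =>
    cauchySeq_of_le_geometric (1 / 2) 2 (by norm_num) fun n => by
      rw [dist_comm]; exact (hnext n (seq n) a).le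
  choose l hl using fun a => cauchySeq_tendsto_of_complete (hcauchy a)
  refine ⟨l, stronglyMeasurable_of_tendsto atTop
    (fun n => StronglyMeasurable.of_discrete.comp_measurable (seq n).2.1)
    (tendsto_pi_nhds.mpr hl), fun a => ?_⟩
  have hlim : Tendsto (fun n => infDist (denseSeq Ω ((seq n).1 a)) (F a)) atTop
      (𝓝 (infDist (l a) (F a))) := ((continuous_infDist_pt _).tendsto _).comp (hl a)
  have hzero : infDist (l a) (F a) ≤ 0 := le_of_tendsto_of_tendsto' hlim
    (tendsto_pow_atTop_nhds_zero_of_lt_one (by norm_num) (by norm_num))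
    fun n => ((seq n).2.2 a).le
  exact ((hcl a).mem_iff_infDist_zero (hne a)).mpr (le_antisymm hzero infDist_nonneg)

end Selection

section VariationalInequality

variable {E : Type*} [NormedAddCommGroup E] [NormedSpace ℝ E]
  {K : Set E} {G : E → (E →L[ℝ] ℝ)} {φ : E → EReal}

lemma convex_setOf_le_apply_sub_add (hφ : condP2 φ) (ℓ : E →L[ℝ] ℝ) (v : E) (c : ℝ) :
    Convex ℝ {u | φ u ≤ ((ℓ (v - u) + c : ℝ) : EReal)} := by
  intro x hx y hy a b ha hb hab
  obtain rfl : b = 1 - a := by linarith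
  have haffine : a * (ℓ (v - x) + c) + (1 - a) * (ℓ (v - y) + c)
      = ℓ (v - (a • x + (1 - a) • y)) + c := by
    simp only [map_sub, map_add, map_smul, smul_eq_mul]
    ring
  calc φ (a • x + (1 - a) • y) ≤ a * φ x + ((1 - a : ℝ) : EReal) * φ y :=
        hφ.2.2.1 x y a ⟨ha, by linarith⟩
    _ ≤ a * ((ℓ (v - x) + c : ℝ) : EReal)
          + ((1 - a : ℝ) : EReal) * ((ℓ (v - y) + c : ℝ) : EReal) := by
        gcongr
        exacts [hx, hy]
    _ = ((ℓ (v - (a • x + (1 - a) • y)) + c : ℝ) : EReal) := by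
        rw [← haffine]; norm_cast

lemma isClosed_setOf_le_apply_sub_add (hφ : LowerSemicontinuous φ) (ℓ : E →L[ℝ] ℝ) (v : E)
    (c : ℝ) : IsClosed {u | φ u ≤ ((ℓ (v - u) + c : ℝ) : EReal)} :=
  hφ.isClosed_epigraph.preimage
    (continuous_id.prodMk (continuous_coe_real_ereal.comp (by fun_prop)))

lemma condP2.exists_eq_coe (hφ : condP2 φ) {u : E} (hu : φ u ≠ ⊤) : ∃ a : ℝ, φ u = a :=
  ⟨_, (EReal.coe_toReal hu (hφ.1 u)).symm⟩

def mintySOL (K : Set E) (G : E → (E →L[ℝ] ℝ)) (φ : E → EReal) (w : E →L[ℝ] ℝ) : Set E :=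
  {u | u ∈ K ∧ ∀ v ∈ K, φ u ≤ ((w (v - u) + (G v) (v - u) : ℝ) : EReal) + φ v}

lemma SOL_subset_mintySOL (hmono : ∀ u ∈ K, ∀ v ∈ K, 0 ≤ (G v - G u) (v - u))
    (w : E →L[ℝ] ℝ) : SOL K G φ w ⊆ mintySOL K G φ w := by
  rintro u ⟨huK, hu⟩
  refine ⟨huK, fun v hv => (hu v hv).trans ?_⟩
  have : (G u) (v - u) ≤ (G v) (v - u) := sub_nonneg.mp (hmono u huK v hv)
  gcongr

lemma le_of_mem_mintySOL_of_mem_Ioc (hφ : condP2 φ) (hKcv : Convex ℝ K) {w : E →L[ℝ] ℝ}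
    {u v : E} (hu : u ∈ mintySOL K G φ w) (hv : v ∈ K) {a c : ℝ} (ha : φ u = a) (hc : φ v = c)
    {t : ℝ} (ht : t ∈ Ioc (0:ℝ) 1) :
    a ≤ w (v - u) + (G (u + t • (v - u))) (v - u) + c := by
  obtain ⟨ht0, ht1⟩ := ht
  set z := u + t • (v - u)
  have hz : z = t • v + (1 - t) • u := by
    simp only [z, smul_sub, sub_smul, one_smul]; abel
  have hzK : z ∈ K := hz ▸ hKcv hv hu.1 ht0.le (by linarith) (by ring)
  have hφz : φ z ≤ ((t * c + (1 - t) * a : ℝ) : EReal) := by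
    rw [hz]
    refine (hφ.2.2.1 v u t ⟨ht0.le, ht1⟩).trans_eq ?_
    rw [hc, ha]; norm_cast
  have h := (hu.2 z hzK).trans (add_le_add_right hφz _)
  rw [show z - u = t • (v - u) by simp [z], ha] at h
  simp only [map_smul, smul_eq_mul] at h
  have : t * a ≤ t * (w (v - u) + (G z) (v - u) + c) := by
    have := EReal.coe_le_coe_iff.mp (h.trans_eq (by norm_cast))
    linarith
  exact le_of_mul_le_mul_left this ht0

lemma mintySOL_subset_SOL
    (hhemi : ∀ u ∈ K, ∀ v ∈ K, ∀ x : E,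
      ContinuousOn (fun t : ℝ => (G (u + t • (v - u))) x) (Icc (0:ℝ) 1))
    (hφ : condP2 φ) (hKcv : Convex ℝ K) (w : E →L[ℝ] ℝ) :
    mintySOL K G φ w ⊆ SOL K G φ w := by
  intro u hu
  refine ⟨hu.1, fun v hv => ?_⟩
  rcases eq_or_ne (φ v) ⊤ with hvtop | hvtop
  · rw [hvtop, EReal.coe_add_top]; exact le_top
  obtain ⟨c, hc⟩ := hφ.exists_eq_coe hvtop
  have hutop : φ u ≠ ⊤ := by
    refine ((hu.2 v hv).trans_lt ?_).ne
    rw [hc, ← EReal.coe_add]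
    exact EReal.coe_lt_top _
  obtain ⟨a, ha⟩ := hφ.exists_eq_coe hutop
  have hcont := (hhemi u hu.1 v hv (v - u) 0 ⟨le_rfl, zero_le_one⟩).mono Ioc_subset_Icc_self
  have h0 : (0:ℝ) ∈ closure (Ioc 0 1) := by
    rw [closure_Ioc zero_ne_one]; exact ⟨le_rfl, zero_le_one⟩
  have hlim : a ≤ w (v - u) + (G u) (v - u) + c := by
    simpa using ContinuousWithinAt.closure_le h0 continuousWithinAt_const
      ((continuousWithinAt_const.add hcont).add continuousWithinAt_const)
      fun t ht => le_of_mem_mintySOL_of_mem_Ioc hφ hKcv hu hv ha hc ht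
  rw [ha, hc]
  exact_mod_cast hlim

lemma exists_norm_le_of_mem_SOL (hφ : condP2 φ) (hcoer : condP3 K G φ) (C : ℝ) :
    ∃ B : ℝ, ∀ w : E →L[ℝ] ℝ, ‖w‖ ≤ C → ∀ u ∈ SOL K G φ w, ‖u‖ ≤ B := by
  obtain ⟨vs, hvsK, hvs, hco⟩ := hcoer
  obtain ⟨R, hR⟩ := hco (C + 1)
  obtain ⟨b, hb⟩ := hφ.exists_eq_coe hvs
  refine ⟨max R (C * ‖vs‖), fun w hw u hu => ?_⟩
  rcases lt_or_ge ‖u‖ R with hlt | hge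
  · exact hlt.le.trans (le_max_left _ _)
  have hsol := hu.2 vs hvsK
  rw [hb, ← EReal.coe_add] at hsol
  obtain ⟨a, ha⟩ := hφ.exists_eq_coe (hsol.trans_lt (EReal.coe_lt_top _)).ne
  have hgrowth := hR u hu.1 hge
  rw [ha] at hsol
  rw [ha, hb] at hgrowth
  norm_cast at hsol hgrowth
  have hGu : (G u) (u - vs) = -(G u) (vs - u) := by rw [← map_neg, neg_sub]
  have hw' : w (vs - u) ≤ C * (‖vs‖ + ‖u‖) :=
    calc w (vs - u) ≤ ‖w‖ * ‖vs - u‖ := (le_abs_self _).trans (w.le_opNorm _)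
      _ ≤ C * (‖vs‖ + ‖u‖) :=
        mul_le_mul hw (norm_sub_le _ _) (norm_nonneg _) ((norm_nonneg w).trans hw)
  exact le_max_of_le_right (by linarith)

lemma ae_bounded_and_memLp_of_ae_mem_SOL (hφ : condP2 φ) (hcoer : condP3 K G φ)
    {α : Type*} [MeasurableSpace α] {μ : Measure α} [IsFiniteMeasure μ]
    {w : α → E →L[ℝ] ℝ} {C : ℝ} (hwC : ∀ᵐ a ∂μ, ‖w a‖ ≤ C) {l : α → E}
    (hl : StronglyMeasurable l) (hlw : ∀ᵐ a ∂μ, l a ∈ SOL K G φ (w a)) (p : ℝ≥0∞) :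
    (∃ B : ℝ, ∀ᵐ a ∂μ, ‖l a‖ ≤ B) ∧ MemLp l p μ := by
  obtain ⟨B, hB⟩ := exists_norm_le_of_mem_SOL hφ hcoer C
  have hlB : ∀ᵐ a ∂μ, ‖l a‖ ≤ B := by
    filter_upwards [hwC, hlw] with a haC ha using hB _ haC _ ha
  exact ⟨⟨B, hlB⟩, .of_bound hl.aestronglyMeasurable B hlB⟩

lemma mem_SOL_of_clusterPt (hP1 : condP1 K G) (hφ : condP2 φ) (hKcl : IsClosed K)
    (hKcv : Convex ℝ K) {ι : Type*} {l : Filter ι} {w : ι → E →L[ℝ] ℝ} {w₀ : E →L[ℝ] ℝ}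
    (hw : Tendsto w l (𝓝 w₀)) {u : ι → E} (hu : ∀ i, u i ∈ SOL K G φ (w i))
    {R : ℝ} (hR : ∀ i, ‖u i‖ ≤ R) {u₀ : E}
    (hclus : ClusterPt (toWeakSpace ℝ E u₀) (map (toWeakSpace ℝ E ∘ u) l)) :
    u₀ ∈ SOL K G φ w₀ := by
  have hu₀K : u₀ ∈ K :=
    mem_of_clusterPt_toWeakSpace hKcl hKcv hclus (Eventually.of_forall fun i => (hu i).1)
  refine mintySOL_subset_SOL hP1.2 hφ hKcv w₀ ⟨hu₀K, fun v hv => ?_⟩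
  rcases eq_or_ne (φ v) ⊤ with hvtop | hvtop
  · rw [hvtop, EReal.coe_add_top]; exact le_top
  obtain ⟨b, hb⟩ := hφ.exists_eq_coe hvtop
  rw [hb, ← EReal.coe_add]
  refine EReal.le_of_forall_lt_iff_le.mp fun z hz => ?_
  set ε := z - (w₀ (v - u₀) + (G v) (v - u₀) + b)
  have hε : 0 < ε := sub_pos.mpr (EReal.coe_lt_coe_iff.mp hz)
  -- the Minty inequality at `v`, relaxed by `ε`, holds eventually along `u` and is weakly closed
  have hmem : u₀ ∈ {y | φ y ≤ (((w₀ + G v) (v - y) + (b + ε) : ℝ) : EReal)} := by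
    refine mem_of_clusterPt_toWeakSpace (isClosed_setOf_le_apply_sub_add hφ.2.2.2 _ _ _)
      (convex_setOf_le_apply_sub_add hφ _ _ _) hclus ?_
    filter_upwards [eventually_forall_apply_le_of_tendsto hw (‖v‖ + R) hε] with i hi
    have hwi := hi (v - u i) ((norm_sub_le _ _).trans (by linarith [hR i]))
    refine ((SOL_subset_mintySOL hP1.1 _ (hu i)).2 v hv).trans ?_
    rw [hb, ← EReal.coe_add, EReal.coe_le_coe_iff, add_apply]
    linarith
  refine hmem.trans_eq ?_
  congr 1
  simp only [add_apply, ε]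
  ring

lemma isClosed_SOL (hP1 : condP1 K G) (hφ : condP2 φ) (hKcl : IsClosed K) (hKcv : Convex ℝ K)
    (w : E →L[ℝ] ℝ) : IsClosed (SOL K G φ w) := by
  refine IsSeqClosed.isClosed fun u u₀ hu hlim => ?_
  obtain ⟨R, hR⟩ := (isBounded_range_of_tendsto u hlim).exists_norm_le
  exact mem_SOL_of_clusterPt hP1 hφ hKcl hKcv tendsto_const_nhds hu
    (fun n => hR _ ⟨n, rfl⟩)
    (ClusterPt.of_le_nhds (((toWeakSpaceCLM ℝ E).continuous.tendsto u₀).comp hlim))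

lemma isClosed_setOf_SOL_inter_nonempty
    (hrefl : Function.Surjective ⇑(NormedSpace.inclusionInDoubleDual ℝ E))
    (hP1 : condP1 K G) (hφ : condP2 φ) (hKcl : IsClosed K) (hKcv : Convex ℝ K)
    {s : Set E} (hscl : IsClosed s) (hscv : Convex ℝ s) (hsb : Bornology.IsBounded s) :
    IsClosed {w : E →L[ℝ] ℝ | (SOL K G φ w ∩ s).Nonempty} := by
  refine IsSeqClosed.isClosed fun w w₀ hw hlim => ?_
  choose u hu using hw
  obtain ⟨R, hR⟩ := hsb.exists_norm_le
  obtain ⟨u₀, hu₀s, hclus⟩ := exists_clusterPt_toWeakSpace hrefl hscl hscv hsb (l := atTop)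
    (Eventually.of_forall fun n => (hu n).2)
  exact ⟨u₀, mem_SOL_of_clusterPt hP1 hφ hKcl hKcv hlim (fun n => (hu n).1)
    (fun n => hR _ (hu n).2) hclus, hu₀s⟩

end VariationalInequality

lemma condP4.continuous_comp_projIcc {Ω₁ Ω₂ : Type*} [NormedAddCommGroup Ω₁] [NormedSpace ℝ Ω₁]
    [NormedAddCommGroup Ω₂] [NormedSpace ℝ Ω₂] {T : ℝ} {g : ℝ → Ω₂ → (Ω₁ →L[ℝ] ℝ)}
    (hP4 : condP4 T g) (hT : 0 ≤ T) (θ : C(Icc (0:ℝ) T, Ω₂)) :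
    Continuous fun ξ => g (projIcc 0 T hT ξ) (extIcc hT θ ξ) := by
  have hproj : Continuous (projIcc 0 T hT) := continuous_projIcc
  exact hP4.1.comp_continuous ((continuous_subtype_val.comp hproj).prodMk
    (θ.continuous.comp hproj)) fun ξ => ⟨Subtype.coe_prop _, mem_univ _⟩

theorem PU_nonempty_general
    {Ω₁ Ω₂ : Type*} [NormedAddCommGroup Ω₁] [NormedSpace ℝ Ω₁] [CompleteSpace Ω₁]
    [TopologicalSpace.SeparableSpace Ω₁]
    [NormedAddCommGroup Ω₂] [NormedSpace ℝ Ω₂]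
    (hΩ₁refl : Function.Surjective ⇑(NormedSpace.inclusionInDoubleDual ℝ Ω₁))
    (K : Set Ω₁) (hKcl : IsClosed K) (hKcv : Convex ℝ K)
    (G : Ω₁ → (Ω₁ →L[ℝ] ℝ)) (φ : Ω₁ → EReal)
    (hP1 : condP1 K G) (hP2 : condP2 φ) (hP3 : condP3 K G φ)
    {T : ℝ} (hT : 0 < T)
    (g : ℝ → Ω₂ → (Ω₁ →L[ℝ] ℝ)) (hP4 : condP4 T g)
    (hSOLne : ∀ w : Ω₁ →L[ℝ] ℝ, (SOL K G φ w).Nonempty) :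
    ∀ θ : C(Icc (0:ℝ) T, Ω₂),
      (∃ l : ℝ → Ω₁, StronglyMeasurable l ∧
        ∀ᵐ ξ ∂(volume.restrict (Icc (0:ℝ) T)), l ξ ∈ SOL K G φ (g ξ (extIcc hT.le θ ξ))) ∧
      (∀ l : ℝ → Ω₁, StronglyMeasurable l →
        (∀ᵐ ξ ∂(volume.restrict (Icc (0:ℝ) T)), l ξ ∈ SOL K G φ (g ξ (extIcc hT.le θ ξ))) →
        (∃ C : ℝ, ∀ᵐ ξ ∂(volume.restrict (Icc (0:ℝ) T)), ‖l ξ‖ ≤ C) ∧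
          MemLp l 2 (volume.restrict (Icc (0:ℝ) T))) ∧
      (PUset K G φ hT.le g θ).Nonempty := by
  intro θ
  set w : ℝ → Ω₁ →L[ℝ] ℝ := fun ξ => g (projIcc 0 T hT.le ξ) (extIcc hT.le θ ξ)
  have hmeas : ∀ x, Measurable fun ξ => infDist x (SOL K G φ (w ξ)) := fun x =>
    ((lowerSemicontinuous_infDist hSOLne x fun r => isClosed_setOf_SOL_inter_nonempty hΩ₁refl
      hP1 hP2 hKcl hKcv isClosed_closedBall (convex_closedBall x r) isBounded_closedBall).comp
      (hP4.continuous_comp_projIcc hT.le θ)).measurable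
  obtain ⟨l, hl, hlw⟩ := exists_stronglyMeasurable_selection (fun ξ => hSOLne (w ξ))
    (fun ξ => isClosed_SOL hP1 hP2 hKcl hKcv (w ξ)) hmeas
  have hsel : ∀ᵐ ξ ∂(volume.restrict (Icc (0:ℝ) T)),
      l ξ ∈ SOL K G φ (g ξ (extIcc hT.le θ ξ)) := by
    filter_upwards [ae_restrict_mem measurableSet_Icc] with ξ hξ
    simpa only [w, projIcc_of_mem hT.le hξ] using hlw ξ
  obtain ⟨C, hC⟩ := hP4.2
  have hgC : ∀ᵐ ξ ∂(volume.restrict (Icc (0:ℝ) T)), ‖g ξ (extIcc hT.le θ ξ)‖ ≤ C :=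
    ae_restrict_of_forall_mem measurableSet_Icc fun ξ hξ => hC ξ hξ _
  have hbound := fun (l' : ℝ → Ω₁) (hl' : StronglyMeasurable l') =>
    ae_bounded_and_memLp_of_ae_mem_SOL hP2 hP3 hgC hl' (p := 2)
  exact ⟨⟨l, hl, hsel⟩, hbound, l, (hbound l hl hsel).2, hsel⟩

/-- `U(·, θ(·))` admits a strongly measurable selection; every such selection is
essentially bounded, hence lies in `L²([0,T],Ω₁)`, so `P_U(θ)` is nonempty. -/
theorem PU_nonempty
    {Ω₁ Ω₂ : Type*} [NormedAddCommGroup Ω₁] [NormedSpace ℝ Ω₁] [CompleteSpace Ω₁]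
    [TopologicalSpace.SeparableSpace Ω₁]
    [NormedAddCommGroup Ω₂] [NormedSpace ℝ Ω₂] [CompleteSpace Ω₂]
    [TopologicalSpace.SeparableSpace Ω₂]
    (hΩ₁refl : Function.Surjective ⇑(NormedSpace.inclusionInDoubleDual ℝ Ω₁))
    (hΩ₂refl : Function.Surjective ⇑(NormedSpace.inclusionInDoubleDual ℝ Ω₂))
    (K : Set Ω₁) (hKne : K.Nonempty) (hKcl : IsClosed K) (hKcv : Convex ℝ K)
    (G : Ω₁ → (Ω₁ →L[ℝ] ℝ)) (φ : Ω₁ → EReal)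
    (hP1 : condP1 K G) (hP2 : condP2 φ) (hP3 : condP3 K G φ)
    {T : ℝ} (hT : 0 < T)
    (g : ℝ → Ω₂ → (Ω₁ →L[ℝ] ℝ)) (hP4 : condP4 T g)
    (hSOLne : ∀ w : Ω₁ →L[ℝ] ℝ, (SOL K G φ w).Nonempty) :
    ∀ θ : C(Icc (0:ℝ) T, Ω₂),
      (∃ l : ℝ → Ω₁, StronglyMeasurable l ∧
        ∀ᵐ ξ ∂(volume.restrict (Icc (0:ℝ) T)), l ξ ∈ SOL K G φ (g ξ (extIcc hT.le θ ξ))) ∧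
      (∀ l : ℝ → Ω₁, StronglyMeasurable l →
        (∀ᵐ ξ ∂(volume.restrict (Icc (0:ℝ) T)), l ξ ∈ SOL K G φ (g ξ (extIcc hT.le θ ξ))) →
        (∃ C : ℝ, ∀ᵐ ξ ∂(volume.restrict (Icc (0:ℝ) T)), ‖l ξ‖ ≤ C) ∧
          MemLp l 2 (volume.restrict (Icc (0:ℝ) T))) ∧
      (PUset K G φ hT.le g θ).Nonempty :=
  PU_nonempty_general hΩ₁refl K hKcl hKcv G φ hP1 hP2 hP3 hT g hP4 hSOLne
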